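/- For every real parameter p > 0 and every equilibrium x = (x₁,x₂,x₃) of the IDMDE vector field, the sum of the three principal 2×2 minors of the Jacobian matrix J(x) equals x₁² + x₂² = √(p²+4) > 0; in particular the identity 1 − x₃² + p·x₃ = 0 holds at the equilibrium. -/

import Mathlib

/-- The IDMDE vector field with parameter `p`. -/
def idmde (p : ℝ) (x : ℝ × ℝ × ℝ) : ℝ × ℝ × ℝ :=
  (x.2.1 * x.2.2 - x.1, (x.2.2 - p) * x.1 - x.2.1, 1 - x.1 * x.2.1)

/-- The Jacobian matrix of the IDMDE vector field with parameter `p`,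
evaluated at `x = (x₁,x₂,x₃)`. -/
def idmdeJacobian (p : ℝ) (x : ℝ × ℝ × ℝ) : Matrix (Fin 3) (Fin 3) ℝ :=
  !![-1, x.2.2, x.2.1;
     x.2.2 - p, -1, x.1;
     -x.2.1, -x.1, 0]

/-! At an equilibrium `x₁x₂ = 1`, `x₂x₃ = x₁` and `(x₃ - p)x₁ = x₂`, hence `x₁² = x₃` and
`x₂² = x₃ - p`. Multiplying these gives `x₃(x₃ - p) = 1`, so `x₁² + x₂² = 2x₃ - p` is a
nonnegative square root of `(2x₃ - p)² = p² + 4`. -/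

theorem idmdeJacobian_sum_principal_minors (p : ℝ) (x : ℝ × ℝ × ℝ) :
    ((idmdeJacobian p x).submatrix ![1, 2] ![1, 2]).det +
        ((idmdeJacobian p x).submatrix ![0, 2] ![0, 2]).det +
        ((idmdeJacobian p x).submatrix ![0, 1] ![0, 1]).det =
      x.1 ^ 2 + x.2.1 ^ 2 + (1 - x.2.2 ^ 2 + p * x.2.2) := by
  simp only [idmdeJacobian, Matrix.det_fin_two, Matrix.submatrix_apply, Matrix.of_apply,
    Matrix.cons_val', Matrix.cons_val_zero, Matrix.cons_val_one, Matrix.cons_val_fin_one,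
    Matrix.cons_val]
  ring

theorem idmde_eq_zero_iff {p : ℝ} {x : ℝ × ℝ × ℝ} :
    idmde p x = 0 ↔
      x.2.1 * x.2.2 = x.1 ∧ (x.2.2 - p) * x.1 = x.2.1 ∧ x.1 * x.2.1 = 1 := by
  simp only [idmde, Prod.ext_iff, Prod.fst_zero, Prod.snd_zero, sub_eq_zero]
  tauto

section Equilibrium

variable {p : ℝ} {x : ℝ × ℝ × ℝ}

theorem sq_fst_of_idmde_eq_zero (hx : idmde p x = 0) : x.1 ^ 2 = x.2.2 := by
  obtain ⟨h₁, -, h₃⟩ := idmde_eq_zero_iff.mp hx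
  linear_combination x.1 * h₁.symm + x.2.2 * h₃

theorem sq_snd_of_idmde_eq_zero (hx : idmde p x = 0) : x.2.1 ^ 2 = x.2.2 - p := by
  obtain ⟨-, h₂, h₃⟩ := idmde_eq_zero_iff.mp hx
  linear_combination x.2.1 * h₂.symm + (x.2.2 - p) * h₃

theorem one_sub_sq_add_mul_of_idmde_eq_zero (hx : idmde p x = 0) :
    1 - x.2.2 ^ 2 + p * x.2.2 = 0 := by
  obtain ⟨-, -, h₃⟩ := idmde_eq_zero_iff.mp hx
  linear_combination x.2.1 ^ 2 * sq_fst_of_idmde_eq_zero hx +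
    x.2.2 * sq_snd_of_idmde_eq_zero hx - (x.1 * x.2.1 + 1) * h₃

theorem sq_fst_add_sq_snd_eq_sqrt_of_idmde_eq_zero (hx : idmde p x = 0) :
    x.1 ^ 2 + x.2.1 ^ 2 = Real.sqrt (p ^ 2 + 4) := by
  have hsum : x.1 ^ 2 + x.2.1 ^ 2 = 2 * x.2.2 - p := by
    linear_combination sq_fst_of_idmde_eq_zero hx + sq_snd_of_idmde_eq_zero hx
  have hsq : (x.1 ^ 2 + x.2.1 ^ 2) ^ 2 = p ^ 2 + 4 := by
    rw [hsum]
    linear_combination -4 * one_sub_sq_add_mul_of_idmde_eq_zero hx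
  rw [← hsq, Real.sqrt_sq (by positivity)]

end Equilibrium

theorem idmde_sum_principal_minors_general (p : ℝ)
    (x : ℝ × ℝ × ℝ) (hx : idmde p x = 0) :
    ((idmdeJacobian p x).submatrix ![1, 2] ![1, 2]).det +
        ((idmdeJacobian p x).submatrix ![0, 2] ![0, 2]).det +
        ((idmdeJacobian p x).submatrix ![0, 1] ![0, 1]).det =
      x.1 ^ 2 + x.2.1 ^ 2 ∧
    x.1 ^ 2 + x.2.1 ^ 2 = Real.sqrt (p ^ 2 + 4) ∧
    0 < Real.sqrt (p ^ 2 + 4) ∧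
    1 - x.2.2 ^ 2 + p * x.2.2 = 0 := by
  have hquad := one_sub_sq_add_mul_of_idmde_eq_zero hx
  refine ⟨?_, sq_fst_add_sq_snd_eq_sqrt_of_idmde_eq_zero hx, by positivity, hquad⟩
  rw [idmdeJacobian_sum_principal_minors, hquad, add_zero]

/-- for every `p > 0` and every equilibrium `x = (x₁,x₂,x₃)` of the
IDMDE vector field, the sum of the three principal 2×2 minors of the Jacobian
`J(x)` (obtained by deleting the `i`-th row and `i`-th column, `i = 1,2,3`)
equals `x₁² + x₂² = √(p²+4) > 0`; in particular `1 − x₃² + p·x₃ = 0` at the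
equilibrium. -/
theorem idmde_sum_principal_minors (p : ℝ) (hp : 0 < p)
    (x : ℝ × ℝ × ℝ) (hx : idmde p x = 0) :
    ((idmdeJacobian p x).submatrix ![1, 2] ![1, 2]).det +
        ((idmdeJacobian p x).submatrix ![0, 2] ![0, 2]).det +
        ((idmdeJacobian p x).submatrix ![0, 1] ![0, 1]).det =
      x.1 ^ 2 + x.2.1 ^ 2 ∧
    x.1 ^ 2 + x.2.1 ^ 2 = Real.sqrt (p ^ 2 + 4) ∧
    0 < Real.sqrt (p ^ 2 + 4) ∧
    1 - x.2.2 ^ 2 + p * x.2.2 = 0 :=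
  idmde_sum_principal_minors_general p x hx
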